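/- arXiv:2111.00507 — 2 statements merged into one kernel-verified Lean document; each statement's English description precedes it below -/
import Mathlib

section
/- Let M be a trace monoid and ω ∈ M a trace. Then the number p_n of left divisors of ω of length n satisfies p_n ≤ P(n) for a polynomial P depending only on the alphabet Σ (not on ω); in fact p_n is bounded by the number of monomials of degree n in |Σ| commuting variables. -/
namespace TraceDoc

/-- The elementary commutation relation on the free monoid induced by an
independence relation `I`. -/
def traceRel {S : Type*} (I : S → S → Prop) : FreeMonoid S → FreeMonoid S → Prop :=
  fun u v => ∃ a b, I a b ∧ u = FreeMonoid.of a * FreeMonoid.of b ∧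
    v = FreeMonoid.of b * FreeMonoid.of a

/-- The congruence on the free monoid generated by the commutations of `I`. -/
def traceCon {S : Type*} (I : S → S → Prop) : Con (FreeMonoid S) := conGen (traceRel I)

/-- The trace monoid `M(Σ, I)`. -/
abbrev TraceMonoid {S : Type*} (I : S → S → Prop) := (traceCon I).Quotient

/-- Canonical projection from words to traces. -/
def tproj {S : Type*} (I : S → S → Prop) : FreeMonoid S →* TraceMonoid I := (traceCon I).mk'

/-- Image of a letter in the trace monoid. -/
def temb {S : Type*} (I : S → S → Prop) (a : S) : TraceMonoid I := tproj I (FreeMonoid.of a)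

/-- Any monoid hom to a commutative monoid factors through the trace congruence. -/
lemma traceCon_le_ker {S N : Type*} [CommMonoid N] (I : S → S → Prop)
    (f : FreeMonoid S →* N) : traceCon I ≤ Con.ker f := by
  refine Con.conGen_le.2 fun u v h => ?_
  obtain ⟨a, b, _, rfl, rfl⟩ := h
  simp [Con.ker_rel, map_mul, mul_comm]

/-- Length of a trace (well defined since commutations preserve length). -/
def tlen {S : Type*} (I : S → S → Prop) : TraceMonoid I → ℕ := fun x =>
  Multiplicative.toAdd
    (Con.lift _ (FreeMonoid.lift fun _ : S => Multiplicative.ofAdd (1 : ℕ))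
      (traceCon_le_ker I _) x)

/-- Number of occurrences of the letter `a` in a trace (well defined). -/
def tcount {S : Type*} [DecidableEq S] (I : S → S → Prop) (a : S) : TraceMonoid I → ℕ := fun x =>
  Multiplicative.toAdd
    (Con.lift _ (FreeMonoid.lift fun b : S =>
        Multiplicative.ofAdd (if b = a then (1 : ℕ) else 0))
      (traceCon_le_ker I _) x)

/-- Left divisibility in a trace monoid. -/
def tle {S : Type*} (I : S → S → Prop) (x y : TraceMonoid I) : Prop := ∃ z, y = x * z

/-- A clique: a finite set of pairwise independent letters. -/
def IsClique {S : Type*} (I : S → S → Prop) (s : Finset S) : Prop := (↑s : Set S).Pairwise I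

/-- The type of cliques of the trace monoid. -/
abbrev Clique {S : Type*} (I : S → S → Prop) := {s : Finset S // IsClique I s}

lemma temb_commute {S : Type*} {I : S → S → Prop} {a b : S} (h : I a b) :
    Commute (temb I a) (temb I b) := by
  have : (traceCon I) (FreeMonoid.of a * FreeMonoid.of b) (FreeMonoid.of b * FreeMonoid.of a) :=
    ConGen.Rel.of _ _ ⟨a, b, h, rfl, rfl⟩
  simpa [Commute, SemiconjBy, temb, tproj, ← map_mul] using (traceCon I).eq.2 this

/-- The product of a clique in the trace monoid. -/
def cprod {S : Type*} (I : S → S → Prop) (c : Clique I) : TraceMonoid I :=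
  c.1.noncommProd (temb I) (fun a ha b hb hab => temb_commute (c.2 ha hb hab))

/-- The Cartier–Foata normality relation `c → d` between cliques. -/
def NormalPair {S : Type*} (I : S → S → Prop) (c d : Clique I) : Prop :=
  ∀ b ∈ d.1, ∃ a ∈ c.1, ¬ I a b

/-- A concurrent system: a right action of the trace monoid on the states
`X` together with a sink `⊥` (modelled by `none`). -/
structure ConcurrentSystem {S : Type*} (I : S → S → Prop) (X : Type*) where
  act : Option X → TraceMonoid I → Option X
  act_one : ∀ α, act α 1 = α
  act_mul : ∀ α x y, act α (x * y) = act (act α x) y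
  act_bot : ∀ x, act none x = none

/-- The set `M_α` of executions from state `α`. -/
def ConcurrentSystem.execs {S : Type*} {I : S → S → Prop} {X : Type*}
    (C : ConcurrentSystem I X) (α : X) : Set (TraceMonoid I) :=
  {x | C.act (some α) x ≠ none}

end TraceDoc

namespace TraceAux
open TraceDoc

variable {S : Type*} {I : S → S → Prop} [DecidableEq S]

/-- `toAdd` of a lift into `Multiplicative ℕ`. -/
lemma toAdd_lift (g : S → ℕ) (w : List S) :
    Multiplicative.toAdd
      (FreeMonoid.lift (fun b => Multiplicative.ofAdd (g b)) (FreeMonoid.ofList w))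
      = (w.map g).sum := by
  rw [FreeMonoid.lift_ofList]
  induction w with
  | nil => simp
  | cons c w ih => simp [List.prod_cons, ih]

lemma sum_one (w : List S) : (w.map fun _ => (1:ℕ)).sum = w.length := by
  induction w with
  | nil => simp
  | cons c w ih => simp [ih] <;> omega

lemma sum_indicator (a : S) (w : List S) :
    (w.map fun b => if b = a then (1:ℕ) else 0).sum = w.count a := by
  induction w with
  | nil => simp
  | cons c w ih => by_cases hc : c = a <;> simp [List.count_cons, hc, ih] <;> omega

lemma tlen_ofList (w : List S) : tlen I (tproj I (FreeMonoid.ofList w)) = w.length := by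
  have h : tlen I (tproj I (FreeMonoid.ofList w))
      = Multiplicative.toAdd
          ((FreeMonoid.lift fun _ : S => Multiplicative.ofAdd (1 : ℕ))
            (FreeMonoid.ofList w)) := by
    simp [tlen, tproj, Con.lift_mk']
  rw [h, toAdd_lift (fun _ => 1)]
  exact sum_one w

lemma tcount_ofList (a : S) (w : List S) :
    tcount I a (tproj I (FreeMonoid.ofList w)) = w.count a := by
  have h : tcount I a (tproj I (FreeMonoid.ofList w))
      = Multiplicative.toAdd
          ((FreeMonoid.lift fun b : S => Multiplicative.ofAdd (if b = a then (1:ℕ) else 0))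
            (FreeMonoid.ofList w)) := by
    simp [tcount, tproj, Con.lift_mk']
  rw [h, toAdd_lift (fun b => if b = a then (1:ℕ) else 0)]
  exact sum_indicator a w

/-- Projection of a word onto the letters `a`, `b`. -/
def filt (a b : S) (w : List S) : List S := w.filter fun c => decide (c = a ∨ c = b)

lemma filt_nil (a b : S) : filt a b [] = [] := rfl

lemma filt_cons_pos {a b c : S} (h : c = a ∨ c = b) (w : List S) :
    filt a b (c :: w) = c :: filt a b w := by
  simp [filt, List.filter_cons, h]

lemma filt_cons_neg {a b c : S} (h : ¬ (c = a ∨ c = b)) (w : List S) :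
    filt a b (c :: w) = filt a b w := by
  simp [filt, List.filter_cons, h]

lemma filt_append (a b : S) (u v : List S) :
    filt a b (u ++ v) = filt a b u ++ filt a b v := by
  simp [filt, List.filter_append]

lemma filt_eq_nil {a b : S} {w : List S} (h : ∀ c ∈ w, ¬ (c = a ∨ c = b)) :
    filt a b w = [] := by
  simp only [filt, List.filter_eq_nil_iff]
  intro c hc
  simpa using h c hc

lemma mem_filt {a b c : S} {w : List S} :
    c ∈ filt a b w ↔ c ∈ w ∧ (c = a ∨ c = b) := by
  simp [filt, List.mem_filter]

/-- The projection monoid homomorphism. -/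
def projHom (a b : S) : FreeMonoid S →* FreeMonoid S :=
  FreeMonoid.lift fun c => if c = a ∨ c = b then FreeMonoid.of c else 1

lemma projHom_ofList (a b : S) (w : List S) :
    projHom a b (FreeMonoid.ofList w) = FreeMonoid.ofList (filt a b w) := by
  induction w with
  | nil => simp [filt_nil, FreeMonoid.ofList_nil]
  | cons c w ih =>
    rw [FreeMonoid.ofList_cons, map_mul, ih]
    by_cases h : c = a ∨ c = b
    · rw [filt_cons_pos h, FreeMonoid.ofList_cons]
      simp [projHom, h]
    · rw [filt_cons_neg h]
      simp [projHom, h]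

lemma projHom_eq (hsym : Symmetric I) (hirr : ∀ a, ¬ I a a) {a b : S} (hab : ¬ I a b)
    {u v : FreeMonoid S} (h : tproj I u = tproj I v) :
    projHom a b u = projHom a b v := by
  have hc : traceCon I u v := (traceCon I).eq.1 h
  have hker : traceCon I ≤ Con.ker (projHom a b) := by
    refine Con.conGen_le.2 fun x y hxy => ?_
    obtain ⟨c, d, hcd, rfl, rfl⟩ := hxy
    have hmain : (if c = a ∨ c = b then FreeMonoid.of c else 1)
          * (if d = a ∨ d = b then FreeMonoid.of d else 1)
        = (if d = a ∨ d = b then FreeMonoid.of d else 1)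
          * (if c = a ∨ c = b then FreeMonoid.of c else 1) := by
      by_cases h1 : c = a ∨ c = b
      · by_cases h2 : d = a ∨ d = b
        · exfalso
          rcases h1 with rfl | rfl <;> rcases h2 with rfl | rfl
          · exact hirr _ hcd
          · exact hab hcd
          · exact hab (hsym hcd)
          · exact hirr _ hcd
        · simp [h1, h2]
      · simp [h1]
    show projHom a b _ = projHom a b _
    simpa [projHom, map_mul] using hmain
  exact hker hc

lemma exists_first {a : S} {v : List S} (hv : a ∈ v) :
    ∃ v1 v2, v = v1 ++ a :: v2 ∧ a ∉ v1 := by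
  induction v with
  | nil => cases hv
  | cons c v ih =>
    by_cases hca : c = a
    · exact ⟨[], v, by simp [hca], by simp⟩
    · have hv' : a ∈ v := by
        rcases List.mem_cons.1 hv with h | h
        · exact absurd h.symm hca
        · exact h
      obtain ⟨v1, v2, rfl, hnv⟩ := ih hv'
      refine ⟨c :: v1, v2, rfl, ?_⟩
      simp only [List.mem_cons, not_or]
      exact ⟨fun h => hca h.symm, hnv⟩

lemma commute_list {a : S} {l : List S} (hs : ∀ b ∈ l, I a b) :
    Commute (tproj I (FreeMonoid.of a)) (tproj I (FreeMonoid.ofList l)) := by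
  induction l with
  | nil => rw [FreeMonoid.ofList_nil, map_one]; exact Commute.one_right _
  | cons b l ih =>
    rw [FreeMonoid.ofList_cons, map_mul]
    exact Commute.mul_right (temb_commute (hs b List.mem_cons_self))
      (ih fun c hc => hs c (List.mem_cons_of_mem _ hc))

/-- The projection lemma: words with equal projections to all dependent pairs
represent the same trace. -/
lemma proj_lemma (hsym : Symmetric I) (hirr : ∀ a, ¬ I a a) :
    ∀ (u v : List S), (∀ a b, ¬ I a b → filt a b u = filt a b v) →
      tproj I (FreeMonoid.ofList u) = tproj I (FreeMonoid.ofList v) := by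
  intro u
  induction u with
  | nil =>
    intro v h
    rcases v with _ | ⟨c, v⟩
    · rfl
    · exfalso
      have hc := h c c (hirr c)
      rw [filt_nil, filt_cons_pos (Or.inl rfl)] at hc
      exact List.cons_ne_nil _ _ hc.symm
  | cons a u ih =>
    intro v h
    have hav : a ∈ v := by
      have hc := h a a (hirr a)
      have ha : a ∈ filt a a (a :: u) := by
        rw [filt_cons_pos (Or.inl rfl)]; exact List.mem_cons_self
      rw [hc] at ha
      exact (mem_filt.1 ha).1
    obtain ⟨v1, v2, rfl, hv1⟩ := exists_first hav
    have hI : ∀ b ∈ v1, I a b := by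
      intro b hb
      by_contra hab
      have key := h a b hab
      rw [filt_cons_pos (Or.inl rfl), filt_append, filt_cons_pos (Or.inl rfl)] at key
      rcases hfv : filt a b v1 with _ | ⟨c, t⟩
      · have hbmem : b ∈ filt a b v1 := mem_filt.2 ⟨hb, Or.inr rfl⟩
        rw [hfv] at hbmem; cases hbmem
      · rw [hfv] at key
        have hc : c ∈ v1 := (mem_filt.1 (hfv ▸ (show c ∈ c :: t from List.mem_cons_self))).1
        have hhead : a = c := by
          have := congrArg List.head? key
          simpa using this
        exact hv1 (hhead ▸ hc)
    have h' : ∀ c d, ¬ I c d → filt c d u = filt c d (v1 ++ v2) := by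
      intro c d hcd
      have key := h c d hcd
      by_cases hp : a = c ∨ a = d
      · have hv1nil : filt c d v1 = [] := by
          apply filt_eq_nil
          intro b hb
          rintro (rfl | rfl)
          · rcases hp with rfl | rfl
            · exact hv1 hb
            · exact hcd (hsym (hI b hb))
          · rcases hp with rfl | rfl
            · exact hcd (hI b hb)
            · exact hv1 hb
        rw [filt_cons_pos (by tauto), filt_append, filt_cons_pos (by tauto), hv1nil] at key
        rw [filt_append, hv1nil]
        simpa using key
      · rw [filt_cons_neg (by tauto), filt_append, filt_cons_neg (by tauto)] at key
        rw [filt_append]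
        exact key
    have hmain := ih (v1 ++ v2) h'
    have hcomm := commute_list (I := I) (a := a) (l := v1) hI
    calc tproj I (FreeMonoid.ofList (a :: u))
        = tproj I (FreeMonoid.of a) * tproj I (FreeMonoid.ofList u) := by
          rw [FreeMonoid.ofList_cons, map_mul]
      _ = tproj I (FreeMonoid.of a) * tproj I (FreeMonoid.ofList (v1 ++ v2)) := by rw [hmain]
      _ = tproj I (FreeMonoid.of a) *
            (tproj I (FreeMonoid.ofList v1) * tproj I (FreeMonoid.ofList v2)) := by
          rw [FreeMonoid.ofList_append, map_mul]
      _ = tproj I (FreeMonoid.ofList v1) *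
            (tproj I (FreeMonoid.of a) * tproj I (FreeMonoid.ofList v2)) := by
          rw [← mul_assoc, hcomm.eq, mul_assoc]
      _ = tproj I (FreeMonoid.ofList (v1 ++ a :: v2)) := by
          rw [FreeMonoid.ofList_append, FreeMonoid.ofList_cons, map_mul, map_mul]

lemma filt_length_eq {u u' : List S} (h : ∀ a, u.count a = u'.count a) (a b : S) :
    (filt a b u).length = (filt a b u').length := by
  by_cases hab : a = b
  · subst hab
    have key : ∀ w : List S, (filt a a w).length = w.count a := by
      intro w
      induction w with
      | nil => simp [filt_nil]
      | cons c w ihw =>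
        by_cases hc : c = a
        · subst hc; rw [filt_cons_pos (Or.inl rfl)]; simp [List.count_cons, ihw]
        · rw [filt_cons_neg (by tauto)]; simp [List.count_cons, hc, ihw]
    rw [key u, key u', h a]
  · have key : ∀ w : List S, (filt a b w).length = w.count a + w.count b := by
      intro w
      induction w with
      | nil => simp [filt_nil]
      | cons c w ihw =>
        by_cases hc : c = a ∨ c = b
        · rw [filt_cons_pos hc]
          rcases hc with rfl | rfl <;>
            simp [List.count_cons, ihw, hab, Ne.symm hab] <;> omega
        · rw [filt_cons_neg hc]
          push_neg at hc
          simp [List.count_cons, hc.1, hc.2, ihw]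
    rw [key u, key u', h a, h b]

/-- Two left divisors of the same trace with the same letter counts coincide. -/
lemma div_inj (hsym : Symmetric I) (hirr : ∀ a, ¬ I a a) {ω x y : TraceMonoid I}
    (hx : tle I x ω) (hy : tle I y ω)
    (h : ∀ a, tcount I a x = tcount I a y) : x = y := by
  obtain ⟨mx, rfl⟩ : ∃ m, tproj I m = x := Con.mk'_surjective x
  obtain ⟨my, rfl⟩ : ∃ m, tproj I m = y := Con.mk'_surjective y
  obtain ⟨zx, hzx⟩ := hx
  obtain ⟨zy, hzy⟩ := hy
  obtain ⟨mzx, rfl⟩ : ∃ m, tproj I m = zx := Con.mk'_surjective zx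
  obtain ⟨mzy, rfl⟩ : ∃ m, tproj I m = zy := Con.mk'_surjective zy
  have heq : tproj I (mx * mzx) = tproj I (my * mzy) := by
    rw [map_mul, map_mul, ← hzx, ← hzy]
  have hcount : ∀ a, (FreeMonoid.toList mx).count a = (FreeMonoid.toList my).count a := by
    intro a
    have hh := h a
    rwa [← FreeMonoid.ofList_toList mx, ← FreeMonoid.ofList_toList my,
      tcount_ofList, tcount_ofList] at hh
  have hproj : ∀ a b, ¬ I a b →
      filt a b (FreeMonoid.toList mx) = filt a b (FreeMonoid.toList my) := by
    intro a b hab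
    have hF := projHom_eq hsym hirr hab heq
    rw [← FreeMonoid.ofList_toList (mx * mzx), ← FreeMonoid.ofList_toList (my * mzy),
      FreeMonoid.toList_mul, FreeMonoid.toList_mul, projHom_ofList, projHom_ofList] at hF
    have hF' : filt a b (FreeMonoid.toList mx ++ FreeMonoid.toList mzx)
        = filt a b (FreeMonoid.toList my ++ FreeMonoid.toList mzy) :=
      congrArg FreeMonoid.toList hF
    rw [filt_append, filt_append] at hF'
    exact (List.append_inj hF' (filt_length_eq hcount a b)).1
  have hfin := proj_lemma hsym hirr _ _ hproj
  rwa [FreeMonoid.ofList_toList, FreeMonoid.ofList_toList] at hfin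

end TraceAux

open TraceDoc TraceAux in
/-- The number of left divisors of a trace `ω` of length `n` is bounded by a
polynomial in `n` depending only on the alphabet; in fact by the number of
monomials of degree `n` in `|Σ|` commuting variables. -/
theorem stmt9 {S : Type*} [Fintype S] (I : S → S → Prop)
    (hsym : Symmetric I) (hirr : ∀ a, ¬ I a a) :
    (∃ P : Polynomial ℕ, ∀ (ω : TraceMonoid I) (n : ℕ),
        Nat.card {x : TraceMonoid I // tle I x ω ∧ tlen I x = n} ≤ P.eval n) ∧
    ∀ (ω : TraceMonoid I) (n : ℕ),
      Nat.card {x : TraceMonoid I // tle I x ω ∧ tlen I x = n} ≤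
        (n + Fintype.card S - 1).choose (Fintype.card S - 1) := by
  classical
  set d := Fintype.card S with hd
  have key : ∀ (ω : TraceMonoid I) (n : ℕ),
      Nat.card {x : TraceMonoid I // tle I x ω ∧ tlen I x = n} ≤
        (n + d - 1).choose (d - 1) := by
    intro ω n
    -- representative word of a trace
    have hrep : ∀ x : TraceMonoid I, ∃ m : FreeMonoid S, tproj I m = x := fun x =>
      Con.mk'_surjective x
    let rep : TraceMonoid I → FreeMonoid S := fun x => Classical.choose (hrep x)
    have hrep_spec : ∀ x, tproj I (rep x) = x := fun x => Classical.choose_spec (hrep x)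
    -- injection into Sym S n
    let f : {x : TraceMonoid I // tle I x ω ∧ tlen I x = n} → Sym S n := fun x =>
      ⟨(↑(FreeMonoid.toList (rep x.1)) : Multiset S), by
        rw [Multiset.coe_card]
        have h1 : tlen I (tproj I (FreeMonoid.ofList (FreeMonoid.toList (rep x.1))))
            = (FreeMonoid.toList (rep x.1)).length := tlen_ofList _
        rw [FreeMonoid.ofList_toList, hrep_spec] at h1
        rw [← h1, x.2.2]⟩
    have hf : Function.Injective f := by
      intro x y hxy
      have hms : (↑(FreeMonoid.toList (rep x.1)) : Multiset S)
          = ↑(FreeMonoid.toList (rep y.1)) := congrArg Sym.toMultiset hxy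
      have hcnt : ∀ a, tcount I a x.1 = tcount I a y.1 := by
        intro a
        have h1 := congrArg (Multiset.count a) hms
        rw [Multiset.coe_count, Multiset.coe_count] at h1
        have h2 : tcount I a (tproj I (FreeMonoid.ofList (FreeMonoid.toList (rep x.1))))
            = (FreeMonoid.toList (rep x.1)).count a := tcount_ofList _ _
        have h3 : tcount I a (tproj I (FreeMonoid.ofList (FreeMonoid.toList (rep y.1))))
            = (FreeMonoid.toList (rep y.1)).count a := tcount_ofList _ _
        rw [FreeMonoid.ofList_toList, hrep_spec] at h2 h3
        rw [h2, h3, h1]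
      exact Subtype.ext (div_inj hsym hirr x.2.1 y.2.1 hcnt)
    have h1 : Nat.card {x : TraceMonoid I // tle I x ω ∧ tlen I x = n}
        ≤ Nat.card (Sym S n) := Nat.card_le_card_of_injective f hf
    rw [Nat.card_eq_fintype_card (α := Sym S n), Sym.card_sym_eq_choose] at h1
    refine h1.trans ?_
    by_cases hd0 : d = 0
    · rw [← hd, hd0]
      by_cases hn : n = 0
      · subst hn; simp
      · have hz : (0 + n - 1).choose n = 0 :=
          Nat.choose_eq_zero_of_lt (by omega)
        rw [hz]; exact Nat.zero_le _
    · have h2 : Fintype.card S + n - 1 = n + d - 1 := by rw [← hd]; omega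
      rw [h2]
      have h3 := Nat.choose_symm (n := n + d - 1) (k := n) (by omega)
      have h4 : n + d - 1 - n = d - 1 := by omega
      rw [h4] at h3
      rw [← h3]
  refine ⟨⟨(Polynomial.X + Polynomial.C (d + 1)) ^ d, fun ω n => ?_⟩, key⟩
  refine (key ω n).trans ?_
  have hev : ((Polynomial.X + Polynomial.C (d + 1)) ^ d).eval n = (n + (d + 1)) ^ d := by
    simp
  rw [hev]
  calc (n + d - 1).choose (d - 1) ≤ (n + d - 1) ^ (d - 1) := Nat.choose_le_pow _ _
    _ ≤ (n + (d + 1)) ^ (d - 1) := Nat.pow_le_pow_left (by omega) _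
    _ ≤ (n + (d + 1)) ^ d := Nat.pow_le_pow_right (by omega) (by omega)
end

section
/- Let 𝒳 = (M, X, ⊥) be a homogeneous and alive concurrent system (for all states α, β there is x with α·x = β, and every letter occurs in some execution from every state). If 𝒳 is not deterministic, then there exist a state α and two executions x_a, x_b ∈ M_α of equal positive length, with α·x_a = α·x_b = α, generating a free submonoid of M contained in M_α; consequently the number of executions from α of length n·|x_a| is at least 2ⁿ. -/
namespace TraceDoc

/-! ### Auxiliary development -/

section Aux

open FreeMonoid

variable {S : Type*} {I : S → S → Prop}

lemma exists_word (x : TraceMonoid I) : ∃ u : List S, x = tproj I (FreeMonoid.ofList u) := by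
  obtain ⟨w, hw⟩ := Con.mk'_surjective (c := traceCon I) x
  exact ⟨FreeMonoid.toList w, by rw [FreeMonoid.ofList_toList]; exact hw.symm⟩

lemma tlen_tproj (u : List S) : tlen I (tproj I (FreeMonoid.ofList u)) = u.length := by
  have key : ∀ u : List S,
      (FreeMonoid.lift fun _ : S => Multiplicative.ofAdd (1 : ℕ)) (FreeMonoid.ofList u)
        = Multiplicative.ofAdd (u.length) := by
    intro u
    induction u with
    | nil => rfl
    | cons c t ih =>
        rw [FreeMonoid.ofList_cons, map_mul, ih, FreeMonoid.lift_eval_of]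
        rw [← ofAdd_add]
        simp [List.length_cons, Nat.add_comm]
  show Multiplicative.toAdd _ = _
  rw [tproj, Con.lift_mk', key]
  rfl

lemma tlen_mul (x y : TraceMonoid I) : tlen I (x * y) = tlen I x + tlen I y := by
  show Multiplicative.toAdd _ = _
  rw [map_mul]
  rfl

lemma tlen_one : tlen I (1 : TraceMonoid I) = 0 := by
  show Multiplicative.toAdd _ = _
  rw [map_one]
  rfl

lemma tlen_pow (x : TraceMonoid I) (n : ℕ) : tlen I (x ^ n) = n * tlen I x := by
  induction n with
  | zero => simpa using tlen_one
  | succ n ih => rw [pow_succ, tlen_mul, ih]; ring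

lemma eq_one_of_tlen_eq_zero {x : TraceMonoid I} (h : tlen I x = 0) : x = 1 := by
  obtain ⟨u, rfl⟩ := exists_word x
  rw [tlen_tproj] at h
  rw [List.length_eq_zero_iff] at h
  subst h
  rfl

lemma tlen_pos_of_ne_one {x : TraceMonoid I} (h : x ≠ 1) : 0 < tlen I x :=
  Nat.pos_of_ne_zero (fun h0 => h (eq_one_of_tlen_eq_zero h0))

variable [DecidableEq S]

/-- Projection of a word onto the letters `a`, `b`. -/
def proj (a b : S) : FreeMonoid S →* FreeMonoid S :=
  FreeMonoid.lift (fun c => if c = a ∨ c = b then FreeMonoid.of c else 1)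

lemma proj_of (a b c : S) :
    proj a b (FreeMonoid.of c) = if c = a ∨ c = b then FreeMonoid.of c else 1 := rfl

lemma proj_cons (a b c : S) (u : List S) :
    proj a b (FreeMonoid.ofList (c :: u)) =
      (if c = a ∨ c = b then FreeMonoid.of c else 1) * proj a b (FreeMonoid.ofList u) := by
  rw [FreeMonoid.ofList_cons, map_mul, proj_of]

lemma proj_invariant (hsym : Symmetric I) {a b : S} (hnab : ¬ I a b) {u v : FreeMonoid S}
    (h : tproj I u = tproj I v) : proj a b u = proj a b v := by
  have hle : traceCon I ≤ Con.ker (proj a b) := by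
    refine Con.conGen_le.2 fun _ _ h => ?_
    obtain ⟨c, d, hI, rfl, rfl⟩ := h
    show proj a b _ = proj a b _
    rw [map_mul, map_mul, proj_of, proj_of]
    by_cases hc : c = a ∨ c = b <;> by_cases hd : d = a ∨ d = b <;>
      simp only [hc, hd, if_true, if_false, if_neg, if_pos, one_mul, mul_one]
    · rcases hc with rfl | rfl <;> rcases hd with rfl | rfl
      · rfl
      · exact absurd hI hnab
      · exact absurd (hsym hI) hnab
      · rfl
  have hcon : traceCon I u v := (traceCon I).eq.1 h
  exact hle hcon

lemma proj_eq_one (a b : S) (l : List S) (h : ∀ c ∈ l, ¬(c = a ∨ c = b)) :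
    proj a b (FreeMonoid.ofList l) = 1 := by
  induction l with
  | nil => rfl
  | cons c t ih =>
      rw [proj_cons, if_neg (h c List.mem_cons_self), one_mul]
      exact ih (fun d hd => h d (List.mem_cons_of_mem c hd))

lemma first_occ {l : List S} {c : S} (h : c ∈ l) :
    ∃ p s, l = p ++ c :: s ∧ c ∉ p := by
  induction l with
  | nil => cases h
  | cons d t ih =>
      by_cases hdc : d = c
      · subst hdc; exact ⟨[], t, rfl, List.not_mem_nil⟩
      · rcases ih (by rcases List.mem_cons.1 h with h' | h'; exact absurd h'.symm hdc; exact h')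
          with ⟨p, s, rfl, hcp⟩
        exact ⟨d :: p, s, rfl, by
          intro hmem
          rcases List.mem_cons.1 hmem with h' | h'
          · exact hdc h'.symm
          · exact hcp h'⟩

lemma of_mul_ne_one (a : S) (x : FreeMonoid S) : FreeMonoid.of a * x ≠ 1 := by
  intro h
  have := congrArg (fun z => (FreeMonoid.toList z).length) h
  simp [FreeMonoid.toList_mul] at this

lemma head_eq_of_of_mul_eq {a b : S} {x y : FreeMonoid S}
    (h : FreeMonoid.of a * x = FreeMonoid.of b * y) : a = b := by
  have := congrArg FreeMonoid.toList h
  simp only [FreeMonoid.toList_mul, FreeMonoid.toList_of] at this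
  exact (List.cons.injEq _ _ _ _ ▸ this).1

lemma tproj_bubble (p : List S) (a : S) (s : List S) (h : ∀ c ∈ p, I c a) :
    tproj I (FreeMonoid.ofList (p ++ a :: s)) = tproj I (FreeMonoid.ofList (a :: (p ++ s))) := by
  have hc : Commute (tproj I (FreeMonoid.ofList p)) (temb I a) := by
    induction p with
    | nil => exact Commute.one_left _
    | cons c t ih =>
        rw [FreeMonoid.ofList_cons, map_mul]
        exact Commute.mul_left (temb_commute (h c List.mem_cons_self))
          (ih (fun d hd => h d (List.mem_cons_of_mem c hd)))
  rw [FreeMonoid.ofList_append, FreeMonoid.ofList_cons, FreeMonoid.ofList_cons,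
    FreeMonoid.ofList_append]
  simp only [map_mul]
  show tproj I (FreeMonoid.ofList p) * (temb I a * tproj I (FreeMonoid.ofList s)) =
    temb I a * (tproj I (FreeMonoid.ofList p) * tproj I (FreeMonoid.ofList s))
  rw [← mul_assoc, hc.eq, mul_assoc]

/-- The projection lemma: words of the same length with equal projections on all
dependent pairs represent the same trace. -/
lemma proj_eq_imp_tproj_eq (hsym : Symmetric I) (hirr : ∀ a, ¬ I a a) :
    ∀ (u v : List S), u.length = v.length →
    (∀ a b, ¬ I a b → proj a b (FreeMonoid.ofList u) = proj a b (FreeMonoid.ofList v)) →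
    tproj I (FreeMonoid.ofList u) = tproj I (FreeMonoid.ofList v) := by
  intro u
  induction u with
  | nil =>
      intro v hlen _
      have : v = [] := by
        cases v with
        | nil => rfl
        | cons c t => simp at hlen
      rw [this]
  | cons a u' ih =>
      intro v hlen H
      -- a occurs in v
      have hav : a ∈ v := by
        by_contra hnv
        have h1 := H a a (hirr a)
        rw [proj_cons, if_pos (Or.inl rfl)] at h1
        rw [proj_eq_one a a v (fun c hc => by
          simp only [or_self]
          intro hca; exact hnv (hca ▸ hc))] at h1
        exact of_mul_ne_one a _ h1
      obtain ⟨p, s, rfl, hap⟩ := first_occ hav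
      have hip : ∀ c ∈ p, I c a := by
        intro c hc
        by_contra hIca
        have hca : c ≠ a := fun h => hap (h ▸ hc)
        have h1 := H c a hIca
        rw [proj_cons, if_pos (Or.inr rfl)] at h1
        obtain ⟨p₁, p₂, rfl, hcp₁⟩ := first_occ hc
        rw [List.append_assoc, List.cons_append] at h1
        rw [FreeMonoid.ofList_append, FreeMonoid.ofList_cons] at h1
        rw [map_mul, map_mul] at h1
        rw [proj_eq_one c a p₁ (fun d hd => by
          rintro (rfl | rfl)
          · exact hcp₁ hd
          · exact hap (List.mem_append.2 (Or.inl hd)))] at h1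
        rw [one_mul, proj_of, if_pos (Or.inl rfl)] at h1
        exact hca (head_eq_of_of_mul_eq h1).symm
      have hbub := tproj_bubble p a s hip
      have hlen' : u'.length = (p ++ s).length := by
        simp only [List.length_cons, List.length_append] at hlen ⊢
        omega
      have H' : ∀ a' b', ¬ I a' b' →
          proj a' b' (FreeMonoid.ofList u') = proj a' b' (FreeMonoid.ofList (p ++ s)) := by
        intro a' b' hI
        have h1 := H a' b' hI
        have h2 : proj a' b' (FreeMonoid.ofList (p ++ a :: s)) =
            proj a' b' (FreeMonoid.ofList (a :: (p ++ s))) :=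
          proj_invariant hsym hI hbub
        rw [h2, proj_cons, proj_cons] at h1
        by_cases hk : a = a' ∨ a = b'
        · rw [if_pos hk] at h1
          exact mul_left_cancel h1
        · rw [if_neg hk] at h1
          simpa using h1
      have htail := ih (p ++ s) hlen' H'
      rw [FreeMonoid.ofList_cons, map_mul, htail, ← map_mul, ← FreeMonoid.ofList_cons, ← hbub]

/-- Left cancellation by a single letter. -/
lemma temb_cancel (hsym : Symmetric I) (hirr : ∀ a, ¬ I a a) (a : S) {x y : TraceMonoid I}
    (h : temb I a * x = temb I a * y) : x = y := by
  obtain ⟨u, rfl⟩ := exists_word x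
  obtain ⟨v, rfl⟩ := exists_word y
  have h' : tproj I (FreeMonoid.ofList (a :: u)) = tproj I (FreeMonoid.ofList (a :: v)) := by
    rw [FreeMonoid.ofList_cons, FreeMonoid.ofList_cons, map_mul, map_mul]
    exact h
  have hlen : u.length = v.length := by
    have := congrArg (tlen I) h'
    rw [tlen_tproj, tlen_tproj] at this
    simpa using this
  have H : ∀ a' b', ¬ I a' b' →
      proj a' b' (FreeMonoid.ofList u) = proj a' b' (FreeMonoid.ofList v) := by
    intro a' b' hI
    have h1 := proj_invariant hsym hI h'
    rw [proj_cons, proj_cons] at h1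
    by_cases hk : a = a' ∨ a = b'
    · rw [if_pos hk] at h1
      exact mul_left_cancel h1
    · rw [if_neg hk] at h1
      simpa using h1
  exact proj_eq_imp_tproj_eq hsym hirr u v hlen H

/-- The trace monoid is left cancellative. -/
lemma trace_mul_left_cancel (hsym : Symmetric I) (hirr : ∀ a, ¬ I a a) (t : TraceMonoid I)
    {x y : TraceMonoid I} (h : t * x = t * y) : x = y := by
  obtain ⟨w, rfl⟩ := exists_word t
  induction w generalizing x y with
  | nil =>
      simpa using h
  | cons c w' ih =>
      rw [FreeMonoid.ofList_cons, map_mul, mul_assoc, mul_assoc] at h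
      exact ih (temb_cancel hsym hirr c h)

end Aux

end TraceDoc

open TraceDoc in
/-- In a homogeneous and alive concurrent system which is not deterministic,
there are two loops `x_a, x_b` at some state `α`, of equal positive length,
generating a free submonoid contained in `M_α`; hence `M_α` has at least `2^n`
executions of length `n·|x_a|`. -/
theorem stmt19 {S X : Type*} [Fintype S] [DecidableEq S] [Fintype X]
    (I : S → S → Prop) (hsym : Symmetric I) (hirr : ∀ a, ¬ I a a)
    (C : ConcurrentSystem I X)
    (hhom : ∀ α β : X, ∃ x : TraceMonoid I, C.act (some α) x = some β)
    (halive : ∀ (α : X) (a : S), ∃ x : TraceMonoid I,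
      C.act (some α) x ≠ none ∧ tcount I a x ≠ 0)
    (hnotdet : ¬ ∀ (α : X) (x y : TraceMonoid I), x ∈ C.execs α →
      y ∈ C.execs α → ∃ z ∈ C.execs α, tle I x z ∧ tle I y z) :
    ∃ (α : X) (xa xb : TraceMonoid I),
      xa ∈ C.execs α ∧ xb ∈ C.execs α ∧
      tlen I xa = tlen I xb ∧ 0 < tlen I xa ∧
      C.act (some α) xa = some α ∧ C.act (some α) xb = some α ∧
      (∃ φ : FreeMonoid Bool →* TraceMonoid I, Function.Injective φ ∧
        φ (FreeMonoid.of false) = xa ∧ φ (FreeMonoid.of true) = xb ∧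
        ∀ w : FreeMonoid Bool, φ w ∈ C.execs α) ∧
      (∀ n : ℕ, 2 ^ n ≤
        Nat.card {x : TraceMonoid I // x ∈ C.execs α ∧ tlen I x = n * tlen I xa}) := by
  push_neg at hnotdet
  obtain ⟨α, x, y, hx, hy, hno⟩ := hnotdet
  -- `hno : ∀ z ∈ C.execs α, tle I x z → ¬ tle I y z` (shape given by push_neg)
  have hx1 : x ≠ 1 := by
    rintro rfl
    exact hno y hy ⟨y, (one_mul y).symm⟩ ⟨1, (mul_one y).symm⟩
  have hy1 : y ≠ 1 := by
    rintro rfl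
    exact hno x hx ⟨1, (mul_one x).symm⟩ ⟨x, (one_mul x).symm⟩
  cases hβx : C.act (some α) x with
  | none => exact absurd hβx hx
  | some β =>
  cases hβy : C.act (some α) y with
  | none => exact absurd hβy hy
  | some γ =>
  obtain ⟨sret, hsret⟩ := hhom β α
  obtain ⟨tret, htret⟩ := hhom γ α
  set xa : TraceMonoid I := x * sret with hxa_def
  set xb : TraceMonoid I := y * tret with hxb_def
  have hActxa : C.act (some α) xa = some α := by
    rw [hxa_def, C.act_mul, hβx, hsret]
  have hActxb : C.act (some α) xb = some α := by
    rw [hxb_def, C.act_mul, hβy, htret]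
  set p := tlen I xa with hp_def
  set q := tlen I xb with hq_def
  have hp : 0 < p := by
    have h1 := tlen_pos_of_ne_one (I := I) hx1
    have h2 : p = tlen I x + tlen I sret := by rw [hp_def, hxa_def, tlen_mul]
    omega
  have hq : 0 < q := by
    have h1 := tlen_pos_of_ne_one (I := I) hy1
    have h2 : q = tlen I y + tlen I tret := by rw [hq_def, hxb_def, tlen_mul]
    omega
  set Xa : TraceMonoid I := xa ^ q with hXa_def
  set Xb : TraceMonoid I := xb ^ p with hXb_def
  have htXa : tlen I Xa = q * p := by rw [hXa_def, tlen_pow]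
  have htXb : tlen I Xb = p * q := by rw [hXb_def, tlen_pow]
  have hXaeqXb : tlen I Xa = tlen I Xb := by rw [htXa, htXb, Nat.mul_comm]
  have hpos : 0 < tlen I Xa := by rw [htXa]; positivity
  have act_pow : ∀ (u : TraceMonoid I), C.act (some α) u = some α →
      ∀ n : ℕ, C.act (some α) (u ^ n) = some α := by
    intro u hu n
    induction n with
    | zero => rw [pow_zero, C.act_one]
    | succ n ih => rw [pow_succ, C.act_mul, ih, hu]
  have hActXa : C.act (some α) Xa = some α := act_pow xa hActxa q
  have hActXb : C.act (some α) Xb = some α := act_pow xb hActxb p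
  have hXa_mem : Xa ∈ C.execs α := by
    show C.act (some α) Xa ≠ none
    rw [hActXa]; exact Option.some_ne_none α
  have hXb_mem : Xb ∈ C.execs α := by
    show C.act (some α) Xb ≠ none
    rw [hActXb]; exact Option.some_ne_none α
  have hxXa : tle I x Xa := by
    obtain ⟨q', hq'⟩ : ∃ q', q = q' + 1 := ⟨q - 1, (Nat.succ_pred_eq_of_pos hq).symm⟩
    exact ⟨sret * xa ^ q', by rw [hXa_def, hq', pow_succ', hxa_def, mul_assoc]⟩
  have hyXb : tle I y Xb := by
    obtain ⟨p', hp'⟩ : ∃ p', p = p' + 1 := ⟨p - 1, (Nat.succ_pred_eq_of_pos hp).symm⟩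
    exact ⟨tret * xb ^ p', by rw [hXb_def, hp', pow_succ', hxb_def, mul_assoc]⟩
  set φ : FreeMonoid Bool →* TraceMonoid I :=
    FreeMonoid.lift (fun c : Bool => if c then Xb else Xa) with hφ_def
  have hφf : φ (FreeMonoid.of false) = Xa := rfl
  have hφt : φ (FreeMonoid.of true) = Xb := rfl
  have hloop : ∀ l : List Bool, C.act (some α) (φ (FreeMonoid.ofList l)) = some α := by
    intro l
    induction l with
    | nil =>
        show C.act (some α) (φ 1) = some α
        rw [map_one, C.act_one]
    | cons c t ih =>
        rw [FreeMonoid.ofList_cons, map_mul, C.act_mul]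
        have hc : C.act (some α) (φ (FreeMonoid.of c)) = some α := by
          cases c
          · rw [hφf]; exact hActXa
          · rw [hφt]; exact hActXb
        rw [hc, ih]
  have hmem : ∀ w : FreeMonoid Bool, φ w ∈ C.execs α := by
    intro w
    have h1 := hloop (FreeMonoid.toList w)
    rw [FreeMonoid.ofList_toList] at h1
    show C.act (some α) (φ w) ≠ none
    rw [h1]; exact Option.some_ne_none α
  have hφlen : ∀ l : List Bool, tlen I (φ (FreeMonoid.ofList l)) = l.length * (q * p) := by
    intro l
    induction l with
    | nil =>
        show tlen I (φ 1) = 0 * (q * p)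
        rw [map_one, tlen_one, Nat.zero_mul]
    | cons c t ih =>
        rw [FreeMonoid.ofList_cons, map_mul, tlen_mul, ih]
        have hc : tlen I (φ (FreeMonoid.of c)) = q * p := by
          cases c
          · rw [hφf, htXa]
          · rw [hφt, htXb, Nat.mul_comm]
        rw [hc, List.length_cons]
        ring
  have hqp : 0 < q * p := by positivity
  have main : ∀ (t t₂ : List Bool),
      φ (FreeMonoid.ofList (false :: t)) = φ (FreeMonoid.ofList (true :: t₂)) → False := by
    intro t t₂ h
    obtain ⟨w₁, hw₁⟩ := hxXa
    obtain ⟨w₂, hw₂⟩ := hyXb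
    have h1 : φ (FreeMonoid.ofList (false :: t)) = x * (w₁ * φ (FreeMonoid.ofList t)) := by
      rw [FreeMonoid.ofList_cons, map_mul, hφf, hw₁, mul_assoc]
    have h2 : φ (FreeMonoid.ofList (true :: t₂)) = y * (w₂ * φ (FreeMonoid.ofList t₂)) := by
      rw [FreeMonoid.ofList_cons, map_mul, hφt, hw₂, mul_assoc]
    exact hno (φ (FreeMonoid.ofList (false :: t))) (hmem _)
      ⟨w₁ * φ (FreeMonoid.ofList t), h1⟩
      ⟨w₂ * φ (FreeMonoid.ofList t₂), by rw [h, h2]⟩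
  have key : ∀ l₁ l₂ : List Bool,
      φ (FreeMonoid.ofList l₁) = φ (FreeMonoid.ofList l₂) → l₁ = l₂ := by
    intro l₁
    induction l₁ with
    | nil =>
        intro l₂ h
        cases l₂ with
        | nil => rfl
        | cons d t₂ =>
            exfalso
            have h1 := congrArg (tlen I) h
            rw [hφlen, hφlen, List.length_nil, List.length_cons] at h1
            have : (0 : ℕ) = (t₂.length + 1) * (q * p) := by simpa using h1
            nlinarith
    | cons c t ih =>
        intro l₂ h
        cases l₂ with
        | nil =>
            exfalso
            have h1 := congrArg (tlen I) h
            rw [hφlen, hφlen, List.length_nil, List.length_cons] at h1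
            have : (t.length + 1) * (q * p) = 0 := by simpa using h1
            nlinarith
        | cons d t₂ =>
            by_cases hcd : c = d
            · subst hcd
              rw [FreeMonoid.ofList_cons, FreeMonoid.ofList_cons, map_mul, map_mul] at h
              have htail := trace_mul_left_cancel hsym hirr _ h
              rw [ih t₂ htail]
            · exfalso
              cases c <;> cases d
              · exact hcd rfl
              · exact main t t₂ h
              · exact main t₂ t h.symm
              · exact hcd rfl
  have hinj : Function.Injective φ := by
    intro w₁ w₂ hw
    have h1 := key (FreeMonoid.toList w₁) (FreeMonoid.toList w₂) (by
      rw [FreeMonoid.ofList_toList, FreeMonoid.ofList_toList]; exact hw)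
    have h2 := congrArg FreeMonoid.ofList h1
    rwa [FreeMonoid.ofList_toList, FreeMonoid.ofList_toList] at h2
  refine ⟨α, Xa, Xb, hXa_mem, hXb_mem, hXaeqXb, hpos, hActXa, hActXb,
    ⟨φ, hinj, hφf, hφt, hmem⟩, ?_⟩
  intro n
  have hfin : Finite {x' : TraceMonoid I // x' ∈ C.execs α ∧ tlen I x' = n * tlen I Xa} := by
    have hsub : {x' : TraceMonoid I | x' ∈ C.execs α ∧ tlen I x' = n * tlen I Xa} ⊆
        Set.range (fun l : {l : List S // l.length = n * tlen I Xa} =>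
          tproj I (FreeMonoid.ofList l.1)) := by
      rintro x' ⟨_, hlenx⟩
      obtain ⟨u, rfl⟩ := exists_word x'
      rw [tlen_tproj] at hlenx
      exact ⟨⟨u, hlenx⟩, rfl⟩
    haveI : Finite {l : List S // l.length = n * tlen I Xa} :=
      (List.finite_length_eq S (n * tlen I Xa)).to_subtype
    exact ((Set.finite_range _).subset hsub).to_subtype
  have hΨ : ∀ f : Fin n → Bool,
      φ (FreeMonoid.ofList (List.ofFn f)) ∈ C.execs α ∧
        tlen I (φ (FreeMonoid.ofList (List.ofFn f))) = n * tlen I Xa := by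
    intro f
    refine ⟨hmem _, ?_⟩
    rw [hφlen, List.length_ofFn, htXa]
  set Ψ : (Fin n → Bool) → {x' : TraceMonoid I // x' ∈ C.execs α ∧ tlen I x' = n * tlen I Xa} :=
    fun f => ⟨φ (FreeMonoid.ofList (List.ofFn f)), hΨ f⟩ with hΨ_def
  have hΨinj : Function.Injective Ψ := by
    intro f g hfg
    have h1 : φ (FreeMonoid.ofList (List.ofFn f)) = φ (FreeMonoid.ofList (List.ofFn g)) :=
      congrArg Subtype.val hfg
    exact List.ofFn_injective (key _ _ h1)
  calc (2 : ℕ) ^ n = Nat.card (Fin n → Bool) := by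
        simp [Nat.card_eq_fintype_card]
    _ ≤ _ := Nat.card_le_card_of_injective Ψ hΨinj
end
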